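/- If all expressions appearing in the end assertion of an LF derivation are in beta-normal form, then every expression occurring anywhere in the derivation is also in beta-normal form; in particular, in any occurrence of a judgment (λx:A. B) : (Πx:A'. K) or (λx:A. M) : (Πx:A'. B) within the derivation, A and A' are syntactically identical. -/

import Mathlib

namespace LFHH

/-! ## Simple types and hohh terms -/

inductive STy : Type
  | lfobj | lftype | o
  | arrow (a b : STy)
deriving DecidableEq

/-- hohh terms: de Bruijn bound variables, named constants. -/
inductive HTerm : Type
  | bvar (n : ℕ)
  | con (c : ℕ)
  | lam (τ : STy) (t : HTerm)
  | app (t u : HTerm)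
deriving DecidableEq

def hshift (d c : ℕ) : HTerm → HTerm
  | .bvar n => if n < c then .bvar n else .bvar (n + d)
  | .con k => .con k
  | .lam τ t => .lam τ (hshift d (c+1) t)
  | .app t u => .app (hshift d c t) (hshift d c u)

/-- substitute `s` for de Bruijn index `k` (standard, with lowering). -/
def hsubst (k : ℕ) (s : HTerm) : HTerm → HTerm
  | .bvar n => if n = k then hshift k 0 s else if k < n then .bvar (n-1) else .bvar n
  | .con c => .con c
  | .lam τ t => .lam τ (hsubst (k+1) s t)
  | .app t u => .app (hsubst k s t) (hsubst k s u)

/-- substitute `s` for the constant `c`. -/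
def hsubstCon (c : ℕ) (s : HTerm) : HTerm → HTerm
  | .bvar n => .bvar n
  | .con k => if k = c then s else .con k
  | .lam τ t => .lam τ (hsubstCon c s t)
  | .app t u => .app (hsubstCon c s t) (hsubstCon c s u)

/-- simultaneous substitution of terms for constants. -/
def hsubstSim (σ : ℕ → Option HTerm) : HTerm → HTerm
  | .bvar n => .bvar n
  | .con k => (σ k).getD (.con k)
  | .lam τ t => .lam τ (hsubstSim σ t)
  | .app t u => .app (hsubstSim σ t) (hsubstSim σ u)

/-- constants occurring in a term. -/
def hcons : HTerm → List ℕ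
  | .bvar _ => []
  | .con c => [c]
  | .lam _ t => hcons t
  | .app t u => hcons t ++ hcons u

/-- beta reduction step. -/
inductive HStepB : HTerm → HTerm → Prop
  | beta (τ : STy) (t u : HTerm) : HStepB (.app (.lam τ t) u) (hsubst 0 u t)
  | lam (τ : STy) {t t'} : HStepB t t' → HStepB (.lam τ t) (.lam τ t')
  | appl {t t'} (u) : HStepB t t' → HStepB (.app t u) (.app t' u)
  | appr (t) {u u'} : HStepB u u' → HStepB (.app t u) (.app t u')

/-- beta or eta reduction step. -/
inductive HStep : HTerm → HTerm → Prop
  | beta (τ : STy) (t u : HTerm) : HStep (.app (.lam τ t) u) (hsubst 0 u t)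
  | eta (τ : STy) (t : HTerm) : HStep (.lam τ (.app (hshift 1 0 t) (.bvar 0))) t
  | lam (τ : STy) {t t'} : HStep t t' → HStep (.lam τ t) (.lam τ t')
  | appl {t t'} (u) : HStep t t' → HStep (.app t u) (.app t' u)
  | appr (t) {u u'} : HStep t u' → HStep (.app t u) (.app t u')

def HNormal (t : HTerm) : Prop := ∀ u, ¬ HStep t u
def HNormalB (t : HTerm) : Prop := ∀ u, ¬ HStepB t u

/-- `t` beta-normalizes to `t'`. -/
def HBNF (t t' : HTerm) : Prop := Relation.ReflTransGen HStepB t t' ∧ HNormalB t'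

/-! ## hohh formulas -/

inductive HForm : Type
  | top
  | hastype (m a : HTerm)
  | papp (u : ℕ) (args : List HTerm)
  | imp (f g : HForm)
  | all (τ : STy) (f : HForm)
deriving DecidableEq

def substF (k : ℕ) (s : HTerm) : HForm → HForm
  | .top => .top
  | .hastype m a => .hastype (hsubst k s m) (hsubst k s a)
  | .papp u args => .papp u (args.map (hsubst k s))
  | .imp f g => .imp (substF k s f) (substF k s g)
  | .all τ f => .all τ (substF (k+1) s f)

def closeT (k x : ℕ) : HTerm → HTerm
  | .bvar n => .bvar n
  | .con c => if c = x then .bvar k else .con c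
  | .lam τ t => .lam τ (closeT (k+1) x t)
  | .app t u => .app (closeT k x t) (closeT k x u)

def closeF (k x : ℕ) : HForm → HForm
  | .top => .top
  | .hastype m a => .hastype (closeT k x m) (closeT k x a)
  | .papp u args => .papp u (args.map (closeT k x))
  | .imp f g => .imp (closeF k x f) (closeF k x g)
  | .all τ f => .all τ (closeF (k+1) x f)

def IsAtom : HForm → Prop
  | .hastype _ _ => True
  | .papp _ _ => True
  | _ => False

mutual
  def IsG : HForm → Prop
    | .top => True
    | .hastype _ _ => True
    | .papp _ _ => True
    | .imp d g => IsD d ∧ IsG g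
    | .all _ g => IsG g
  def IsD : HForm → Prop
    | .top => False
    | .hastype _ _ => True
    | .papp _ _ => True
    | .imp g d => IsG g ∧ IsD d
    | .all _ d => IsD d
end

/-! ## hohh typing and sequent calculus -/

abbrev Sig := List (ℕ × STy)

def sigNames (Sg : Sig) : List ℕ := Sg.map Prod.fst

inductive HWt : Sig → List STy → HTerm → STy → Prop
  | bvar {Sg env n τ} : env[n]? = some τ → HWt Sg env (.bvar n) τ
  | con {Sg env c τ} : (c, τ) ∈ Sg → HWt Sg env (.con c) τ
  | lam {Sg env τ σ t} : HWt Sg (τ :: env) t σ → HWt Sg env (.lam τ t) (.arrow τ σ)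
  | app {Sg env τ σ t u} : HWt Sg env t (.arrow τ σ) → HWt Sg env u τ →
      HWt Sg env (.app t u) σ

/-! Height-indexed sequent calculus for the hohh fragment. -/
mutual
  inductive Seq : ℕ → Sig → List HForm → HForm → Prop
    | top {n Sg Γ} : Seq n Sg Γ .top
    | impR {n Sg Γ d g} : Seq n Sg (d :: Γ) g → Seq (n+1) Sg Γ (.imp d g)
    | allR {n Sg Γ τ g} (c : ℕ) : c ∉ sigNames Sg →
        Seq n ((c, τ) :: Sg) Γ (substF 0 (.con c) g) → Seq (n+1) Sg Γ (.all τ g)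
    | decide {n Sg Γ a d} : d ∈ Γ → IsAtom a → Focus n Sg Γ a d → Seq (n+1) Sg Γ a
  inductive Focus : ℕ → Sig → List HForm → HForm → HForm → Prop
    | init {n Sg Γ a} : IsAtom a → Focus n Sg Γ a a
    | allL {n Sg Γ a τ d} (t : HTerm) : HWt Sg [] t τ →
        Focus n Sg Γ a (substF 0 t d) → Focus (n+1) Sg Γ a (.all τ d)
    | impL {n Sg Γ a g d} : Seq n Sg Γ g → Focus n Sg Γ a d →
        Focus (n+1) Sg Γ a (.imp g d)
end

/-- derivability (some height). -/
def SeqD (Sg : Sig) (Γ : List HForm) (g : HForm) : Prop := ∃ n, Seq n Sg Γ g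

/-- clause ∀x1.(F1 ⊃ ... ∀xn.(Fn ⊃ A')...). -/
def mkClause : List (STy × HForm) → HForm → HForm
  | [], a => a
  | (τ, f) :: L, a => .all τ (.imp f (mkClause L a))

/-- peel a clause along a list of instantiating terms, returning
the instantiated bodies and head. -/
def peel : List HTerm → HForm → Option (List HForm × HForm)
  | [], f => some ([], f)
  | t :: ts, .all _ (.imp g d) =>
      (peel ts (substF 0 t d)).map (fun p => ((substF 0 t g) :: p.1, p.2))
  | _ :: _, _ => none

/-! ## LF syntax -/

mutual
  inductive LFKind : Type
    | type
    | pi (A : LFType) (K : LFKind)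
  inductive LFType : Type
    | tvar (u : ℕ)
    | pi (A : LFType) (B : LFType)
    | lam (A : LFType) (B : LFType)
    | app (A : LFType) (M : LFObj)
  inductive LFObj : Type
    | bvar (n : ℕ)
    | fvar (x : ℕ)
    | lam (A : LFType) (M : LFObj)
    | app (M N : LFObj)
end

/-! open: instantiate bound variable `k` with object `N` (locally nameless style). -/
mutual
  def openK (k : ℕ) (N : LFObj) : LFKind → LFKind
    | .type => .type
    | .pi A K => .pi (openT k N A) (openK (k+1) N K)
  def openT (k : ℕ) (N : LFObj) : LFType → LFType
    | .tvar u => .tvar u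
    | .pi A B => .pi (openT k N A) (openT (k+1) N B)
    | .lam A B => .lam (openT k N A) (openT (k+1) N B)
    | .app A M => .app (openT k N A) (openO k N M)
  def openO (k : ℕ) (N : LFObj) : LFObj → LFObj
    | .bvar n => if n = k then N else .bvar n
    | .fvar x => .fvar x
    | .lam A M => .lam (openT k N A) (openO (k+1) N M)
    | .app M M' => .app (openO k N M) (openO k N M')
end

/-! substitute object `N` for the free (named) variable `x`. -/
mutual
  def substK (x : ℕ) (N : LFObj) : LFKind → LFKind
    | .type => .type
    | .pi A K => .pi (substT x N A) (substK x N K)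
  def substT (x : ℕ) (N : LFObj) : LFType → LFType
    | .tvar u => .tvar u
    | .pi A B => .pi (substT x N A) (substT x N B)
    | .lam A B => .lam (substT x N A) (substT x N B)
    | .app A M => .app (substT x N A) (substO x N M)
  def substO (x : ℕ) (N : LFObj) : LFObj → LFObj
    | .bvar n => .bvar n
    | .fvar y => if y = x then N else .fvar y
    | .lam A M => .lam (substT x N A) (substO x N M)
    | .app M M' => .app (substO x N M) (substO x N M')
end

/-! simultaneous substitution of objects for free variables. -/
mutual
  def substSimK (σ : ℕ → Option LFObj) : LFKind → LFKind
    | .type => .type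
    | .pi A K => .pi (substSimT σ A) (substSimK σ K)
  def substSimT (σ : ℕ → Option LFObj) : LFType → LFType
    | .tvar u => .tvar u
    | .pi A B => .pi (substSimT σ A) (substSimT σ B)
    | .lam A B => .lam (substSimT σ A) (substSimT σ B)
    | .app A M => .app (substSimT σ A) (substSimO σ M)
  def substSimO (σ : ℕ → Option LFObj) : LFObj → LFObj
    | .bvar n => .bvar n
    | .fvar y => (σ y).getD (.fvar y)
    | .lam A M => .lam (substSimT σ A) (substSimO σ M)
    | .app M M' => .app (substSimO σ M) (substSimO σ M')
end

/-! rename free variable `x` (object-level and type-level) to `y`. -/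
mutual
  def renameK (x y : ℕ) : LFKind → LFKind
    | .type => .type
    | .pi A K => .pi (renameT x y A) (renameK x y K)
  def renameT (x y : ℕ) : LFType → LFType
    | .tvar u => .tvar (if u = x then y else u)
    | .pi A B => .pi (renameT x y A) (renameT x y B)
    | .lam A B => .lam (renameT x y A) (renameT x y B)
    | .app A M => .app (renameT x y A) (renameO x y M)
  def renameO (x y : ℕ) : LFObj → LFObj
    | .bvar n => .bvar n
    | .fvar z => .fvar (if z = x then y else z)
    | .lam A M => .lam (renameT x y A) (renameO x y M)
    | .app M M' => .app (renameO x y M) (renameO x y M')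
end

/-! free names occurring in LF expressions (both object- and type-level names). -/
mutual
  def namesK : LFKind → List ℕ
    | .type => []
    | .pi A K => namesT A ++ namesK K
  def namesT : LFType → List ℕ
    | .tvar u => [u]
    | .pi A B => namesT A ++ namesT B
    | .lam A B => namesT A ++ namesT B
    | .app A M => namesT A ++ namesO M
  def namesO : LFObj → List ℕ
    | .bvar _ => []
    | .fvar x => [x]
    | .lam A M => namesT A ++ namesO M
    | .app M M' => namesO M ++ namesO M'
end

/-! local closedness: all bound-variable indices below `k`. -/
mutual
  def closedK (k : ℕ) : LFKind → Prop
    | .type => True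
    | .pi A K => closedT k A ∧ closedK (k+1) K
  def closedT (k : ℕ) : LFType → Prop
    | .tvar _ => True
    | .pi A B => closedT k A ∧ closedT (k+1) B
    | .lam A B => closedT k A ∧ closedT (k+1) B
    | .app A M => closedT k A ∧ closedO k M
  def closedO (k : ℕ) : LFObj → Prop
    | .bvar n => n < k
    | .fvar _ => True
    | .lam A M => closedT k A ∧ closedO (k+1) M
    | .app M M' => closedO k M ∧ closedO k M'
end

def LC (M : LFObj) : Prop := closedO 0 M

/-! ## LF beta reduction and normal forms -/

mutual
  inductive StepK : LFKind → LFKind → Prop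
    | pi1 {A A' K} : StepT A A' → StepK (.pi A K) (.pi A' K)
    | pi2 {A K K'} : StepK K K' → StepK (.pi A K) (.pi A K')
  inductive StepT : LFType → LFType → Prop
    | beta {A B N} : StepT (.app (.lam A B) N) (openT 0 N B)
    | pi1 {A A' B} : StepT A A' → StepT (.pi A B) (.pi A' B)
    | pi2 {A B B'} : StepT B B' → StepT (.pi A B) (.pi A B')
    | lam1 {A A' B} : StepT A A' → StepT (.lam A B) (.lam A' B)
    | lam2 {A B B'} : StepT B B' → StepT (.lam A B) (.lam A B')
    | app1 {A A' M} : StepT A A' → StepT (.app A M) (.app A' M)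
    | app2 {A M M'} : StepO M M' → StepT (.app A M) (.app A M')
  inductive StepO : LFObj → LFObj → Prop
    | beta {A M N} : StepO (.app (.lam A M) N) (openO 0 N M)
    | lam1 {A A' M} : StepT A A' → StepO (.lam A M) (.lam A' M)
    | lam2 {A M M'} : StepO M M' → StepO (.lam A M) (.lam A M')
    | app1 {M M' N} : StepO M M' → StepO (.app M N) (.app M' N)
    | app2 {M N N'} : StepO N N' → StepO (.app M N) (.app M N')
end

def NormK (K : LFKind) : Prop := ∀ K', ¬ StepK K K'
def NormT (A : LFType) : Prop := ∀ A', ¬ StepT A A'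
def NormO (M : LFObj) : Prop := ∀ M', ¬ StepO M M'

/-- beta-normalization relations. -/
def KNF (K K' : LFKind) : Prop := Relation.ReflTransGen StepK K K' ∧ NormK K'
def TNF (A A' : LFType) : Prop := Relation.ReflTransGen StepT A A' ∧ NormT A'
def ONF (M M' : LFObj) : Prop := Relation.ReflTransGen StepO M M' ∧ NormO M'

/-! ## LF contexts, judgments, typing -/

inductive EVal : Type
  | kind (K : LFKind)
  | type (A : LFType)

abbrev Ctx := List (ℕ × EVal)

def ctxNames (Γ : Ctx) : List ℕ := Γ.map Prod.fst

def EVNF : EVal → EVal → Prop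
  | .kind K, .kind K' => KNF K K'
  | .type A, .type A' => TNF A A'
  | _, _ => False

def CtxNF (Γ Γ' : Ctx) : Prop :=
  List.Forall₂ (fun p q => p.1 = q.1 ∧ EVNF p.2 q.2) Γ Γ'

def substEV (x : ℕ) (N : LFObj) : EVal → EVal
  | .kind K => .kind (substK x N K)
  | .type A => .type (substT x N A)

def substCtx (x : ℕ) (N : LFObj) (Γ : Ctx) : Ctx :=
  Γ.map (fun p => (p.1, substEV x N p.2))

def renameEV (x y : ℕ) : EVal → EVal
  | .kind K => .kind (renameK x y K)
  | .type A => .type (renameT x y A)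

def renameCtx (x y : ℕ) (Γ : Ctx) : Ctx :=
  Γ.map (fun p => (p.1, renameEV x y p.2))

/-- LF judgments (other than context well-formedness). -/
inductive LFJudg : Type
  | kind (K : LFKind)
  | istype (A : LFType) (K : LFKind)
  | isobj (M : LFObj) (A : LFType)

def substJudg (x : ℕ) (N : LFObj) : LFJudg → LFJudg
  | .kind K => .kind (substK x N K)
  | .istype A K => .istype (substT x N A) (substK x N K)
  | .isobj M A => .isobj (substO x N M) (substT x N A)

def renameJudg (x y : ℕ) : LFJudg → LFJudg
  | .kind K => .kind (renameK x y K)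
  | .istype A K => .istype (renameT x y A) (renameK x y K)
  | .isobj M A => .isobj (renameO x y M) (renameT x y A)

def namesJudg : LFJudg → List ℕ
  | .kind K => namesK K
  | .istype A K => namesT A ++ namesK K
  | .isobj M A => namesO M ++ namesT A

def JudgNF : LFJudg → LFJudg → Prop
  | .kind K, .kind K' => KNF K K'
  | .istype A K, .istype A' K' => TNF A A' ∧ KNF K K'
  | .isobj M A, .isobj M' A' => ONF M M' ∧ TNF A A'
  | _, _ => False

/-! The LF typing rules (Figure 2), in locally nameless style. -/
mutual
  inductive WfCtx : Ctx → Prop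
    | nil : WfCtx []
    | kind {Γ K u} : WfKind Γ K → WfCtx Γ → u ∉ ctxNames Γ →
        WfCtx ((u, .kind K) :: Γ)
    | type {Γ A x} : WfType Γ A .type → WfCtx Γ → x ∉ ctxNames Γ →
        WfCtx ((x, .type A) :: Γ)
  inductive WfKind : Ctx → LFKind → Prop
    | type {Γ} : WfCtx Γ → WfKind Γ .type
    | pi {Γ A K} (x : ℕ) : WfType Γ A .type →
        x ∉ ctxNames Γ → x ∉ namesK K →
        WfKind ((x, .type A) :: Γ) (openK 0 (.fvar x) K) →
        WfKind Γ (.pi A K)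
  inductive WfType : Ctx → LFType → LFKind → Prop
    | var {Γ u K K'} : WfCtx Γ → (u, .kind K) ∈ Γ → KNF K K' →
        WfType Γ (.tvar u) K'
    | pi {Γ A B} (x : ℕ) : WfType Γ A .type →
        x ∉ ctxNames Γ → x ∉ namesT B →
        WfType ((x, .type A) :: Γ) (openT 0 (.fvar x) B) .type →
        WfType Γ (.pi A B) .type
    | lam {Γ A A' B K} (x : ℕ) : WfType Γ A .type →
        x ∉ ctxNames Γ → x ∉ namesT B → x ∉ namesK K →
        WfType ((x, .type A) :: Γ) (openT 0 (.fvar x) B) (openK 0 (.fvar x) K) →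
        TNF A A' →
        WfType Γ (.lam A B) (.pi A' K)
    | app {Γ A B K K' M} : WfType Γ A (.pi B K) → WfObj Γ M B →
        KNF (openK 0 M K) K' → WfType Γ (.app A M) K'
  inductive WfObj : Ctx → LFObj → LFType → Prop
    | var {Γ x A A'} : WfCtx Γ → (x, .type A) ∈ Γ → TNF A A' →
        WfObj Γ (.fvar x) A'
    | lam {Γ A A' B M} (x : ℕ) : WfType Γ A .type →
        x ∉ ctxNames Γ → x ∉ namesO M → x ∉ namesT B →
        WfObj ((x, .type A) :: Γ) (openO 0 (.fvar x) M) (openT 0 (.fvar x) B) →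
        TNF A A' →
        WfObj Γ (.lam A M) (.pi A' B)
    | app {Γ M N A B B'} : WfObj Γ M (.pi A B) → WfObj Γ N A →
        TNF (openT 0 N B) B' → WfObj Γ (.app M N) B'
end

def WfJudg (Γ : Ctx) : LFJudg → Prop
  | .kind K => WfKind Γ K
  | .istype A K => WfType Γ A K
  | .isobj M A => WfObj Γ M A

/-! ## Canonical forms -/

/-! Canonical (beta-normal, eta-long / fully applied) forms of LF,
presented as the standard canonical-forms type system. -/
mutual
  inductive CanK : Ctx → LFKind → Prop
    | type {Γ} : CanK Γ .type
    | pi {Γ A K} (x : ℕ) : CanT Γ A .type →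
        x ∉ ctxNames Γ → x ∉ namesK K →
        CanK ((x, .type A) :: Γ) (openK 0 (.fvar x) K) →
        CanK Γ (.pi A K)
  inductive CanT : Ctx → LFType → LFKind → Prop
    | atom {Γ A} : AtT Γ A .type → CanT Γ A .type
    | pi {Γ A B} (x : ℕ) : CanT Γ A .type →
        x ∉ ctxNames Γ → x ∉ namesT B →
        CanT ((x, .type A) :: Γ) (openT 0 (.fvar x) B) .type →
        CanT Γ (.pi A B) .type
    | lam {Γ A B K} (x : ℕ) : CanT Γ A .type →
        x ∉ ctxNames Γ → x ∉ namesT B → x ∉ namesK K →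
        CanT ((x, .type A) :: Γ) (openT 0 (.fvar x) B) (openK 0 (.fvar x) K) →
        CanT Γ (.lam A B) (.pi A K)
  inductive AtT : Ctx → LFType → LFKind → Prop
    | var {Γ u K} : (u, .kind K) ∈ Γ → AtT Γ (.tvar u) K
    | app {Γ A B K K' M} : AtT Γ A (.pi B K) → CanO Γ M B →
        KNF (openK 0 M K) K' → AtT Γ (.app A M) K'
  inductive CanO : Ctx → LFObj → LFType → Prop
    | atom {Γ M A} : AtO Γ M A → AtT Γ A .type → CanO Γ M A
    | lam {Γ A B M} (x : ℕ) : CanT Γ A .type →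
        x ∉ ctxNames Γ → x ∉ namesO M → x ∉ namesT B →
        CanO ((x, .type A) :: Γ) (openO 0 (.fvar x) M) (openT 0 (.fvar x) B) →
        CanO Γ (.lam A M) (.pi A B)
  inductive AtO : Ctx → LFObj → LFType → Prop
    | var {Γ x A} : (x, .type A) ∈ Γ → AtO Γ (.fvar x) A
    | app {Γ M N A B B'} : AtO Γ M (.pi A B) → CanO Γ N A →
        TNF (openT 0 N B) B' → AtO Γ (.app M N) B'
end

inductive CanCtx : Ctx → Prop
  | nil : CanCtx []
  | kind {Γ K u} : CanK Γ K → CanCtx Γ → u ∉ ctxNames Γ →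
      CanCtx ((u, .kind K) :: Γ)
  | type {Γ A x} : CanT Γ A .type → CanCtx Γ → x ∉ ctxNames Γ →
      CanCtx ((x, .type A) :: Γ)

def CanEV (Γ : Ctx) : EVal → Prop
  | .kind K => CanK Γ K
  | .type A => CanT Γ A .type

def CanJudg (Γ : Ctx) : LFJudg → Prop
  | .kind K => CanK Γ K
  | .istype A K => CanT Γ A K
  | .isobj M A => CanO Γ M A

/-! ## Encoding of LF into hohh -/

/-- simple type assigned to the encoding of an object of a given LF type. -/
def phiT : LFType → STy
  | .pi A B => .arrow (phiT A) (phiT B)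
  | _ => .lfobj

def phiK : LFKind → STy
  | .type => .lftype
  | .pi A K => .arrow (phiT A) (phiK K)

/-! type-erasing encoding of LF objects and (base) types into hohh terms. -/
mutual
  def encO : LFObj → HTerm
    | .bvar n => .bvar n
    | .fvar x => .con x
    | .lam A M => .lam (phiT A) (encO M)
    | .app M N => .app (encO M) (encO N)
  def encT : LFType → HTerm
    | .tvar u => .con u
    | .app A M => .app (encT A) (encO M)
    | .pi _ _ => .con 0
    | .lam _ _ => .con 0
end

def IsBaseT : LFType → Prop
  | .tvar _ => True
  | .app A _ => IsBaseT A
  | _ => False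

/-- head type-family constant of a base type. -/
def headT : LFType → ℕ
  | .tvar u => u
  | .app A _ => headT A
  | _ => 0

/-- encoded argument list of a base type. -/
def argsT : LFType → List HTerm
  | .app A M => argsT A ++ [encO M]
  | _ => []

/-- signature of constants corresponding to an LF context. -/
def sigOf (Γ : Ctx) : Sig :=
  Γ.map (fun p => (p.1, match p.2 with | .kind K => phiK K | .type A => phiT A))

/-! ## The simple translation -/

/-- ⟦A⟧ M = F : the simple translation of an LF type applied to an hohh term. -/
inductive SimpleT : LFType → HTerm → HForm → Prop
  | base {A M} : IsBaseT A → SimpleT A M (.hastype M (encT A))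
  | pi {A B M FA FB} (x : ℕ) :
      x ∉ namesT A → x ∉ namesT B → x ∉ hcons M →
      SimpleT A (.con x) FA →
      SimpleT (openT 0 (.fvar x) B) (.app M (.con x)) FB →
      SimpleT (.pi A B) M (.all (phiT A) (closeF 0 x (.imp FA FB)))

/-- translation of an LF context (specification) into a logic program;
kind assignments are dropped. -/
inductive SimpleCtx : Ctx → List HForm → Prop
  | nil : SimpleCtx [] []
  | kind {Γ Ds u K} : SimpleCtx Γ Ds → SimpleCtx ((u, .kind K) :: Γ) Ds
  | type {Γ Ds x A F} : SimpleT A (.con x) F → SimpleCtx Γ Ds →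
      SimpleCtx ((x, .type A) :: Γ) (F :: Ds)

/-! ## Rigid occurrences -/

/-- LF-level argument list of a base type. -/
def argsLF : LFType → List LFObj
  | .app A M => argsLF A ++ [M]
  | _ => []

mutual
  /-- Γ⃗; δ; x ⊢o M : x occurs rigidly in the object M. -/
  inductive RigidO : List ℕ → List ℕ → ℕ → LFObj → Prop
    | init {gs δ x} (ys : List ℕ) : ys.Nodup → (∀ y ∈ ys, y ∈ δ) →
        RigidO gs δ x ((ys.map LFObj.fvar).foldl LFObj.app (.fvar x))
    | app {gs δ x y} (args : List LFObj) {Mi} : y ∉ gs → Mi ∈ args →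
        RigidO gs δ x Mi →
        RigidO gs δ x (args.foldl LFObj.app (.fvar y))
    | abs {gs δ x A M} (y : ℕ) : y ∉ δ → y ∉ gs → y ≠ x → y ∉ namesO M →
        RigidO gs (δ ++ [y]) x (openO 0 (.fvar y) M) →
        RigidO gs δ x (.lam A M)
  /-- Γ⃗; x ⊢t A : x occurs rigidly in the type A. -/
  inductive RigidT : List ℕ → ℕ → LFType → Prop
    | app {gs x A} (Mi : LFObj) : IsBaseT A → Mi ∈ argsLF A → RigidO gs [] x Mi →
        RigidT gs x A
    | pi {gs x A B} (y : ℕ) : y ∉ gs → y ≠ x → y ∉ namesT B →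
        RigidT (gs ++ [y]) x (openT 0 (.fvar y) B) →
        RigidT gs x (.pi A B)
end

/-! ## The optimized translation -/

mutual
  /-- ⦇A⦈Γ⃗ M = F : negative (program clause) optimized translation. -/
  inductive OptN : List ℕ → LFType → HTerm → HForm → Prop
    | base {gs A M} : IsBaseT A → OptN gs A M (.papp (headT A) (M :: argsT A))
    | pi_rigid {gs A B M F} (x : ℕ) :
        x ∉ gs → x ∉ namesT A → x ∉ namesT B → x ∉ hcons M →
        RigidT (gs ++ [x]) x (openT 0 (.fvar x) B) →
        OptN (gs ++ [x]) (openT 0 (.fvar x) B) (.app M (.con x)) F →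
        OptN gs (.pi A B) M (.all (phiT A) (.imp .top (closeF 0 x F)))
    | pi_nonrigid {gs A B M FA F} (x : ℕ) :
        x ∉ gs → x ∉ namesT A → x ∉ namesT B → x ∉ hcons M →
        ¬ RigidT (gs ++ [x]) x (openT 0 (.fvar x) B) →
        OptP A (.con x) FA →
        OptN (gs ++ [x]) (openT 0 (.fvar x) B) (.app M (.con x)) F →
        OptN gs (.pi A B) M (.all (phiT A) (closeF 0 x (.imp FA F)))
  /-- ⦃A⦄ M = F : positive (goal) optimized translation. -/
  inductive OptP : LFType → HTerm → HForm → Prop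
    | base {A M} : IsBaseT A → OptP A M (.papp (headT A) (M :: argsT A))
    | pi {A B M FA F} (x : ℕ) :
        x ∉ namesT A → x ∉ namesT B → x ∉ hcons M →
        OptN [] A (.con x) FA →
        OptP (openT 0 (.fvar x) B) (.app M (.con x)) F →
        OptP (.pi A B) M (.all (phiT A) (closeF 0 x (.imp FA F)))
end

inductive OptCtx : Ctx → List HForm → Prop
  | nil : OptCtx [] []
  | kind {Γ Ds u K} : OptCtx Γ Ds → OptCtx ((u, .kind K) :: Γ) Ds
  | type {Γ Ds x A F} : OptN [] A (.con x) F → OptCtx Γ Ds →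
      OptCtx ((x, .type A) :: Γ) (F :: Ds)

/-! ## Miscellaneous -/

/-- Π-prefix construction: mkPi [B1,...,Bn] A = ΠB1....ΠBn. A (de Bruijn). -/
def mkPi (Bs : List LFType) (A : LFType) : LFType := Bs.foldr .pi A

/-- instantiate the de Bruijn variables of the body of an n-ary Π-prefix:
the i-th term replaces index (n-1-i). -/
def instT (ts : List LFObj) (A : LFType) : LFType :=
  (((List.range ts.length).reverse).zip ts).foldl (fun A p => openT p.1 p.2 A) A

/-- environment mapping names to hohh terms. -/
def envOf (xs : List ℕ) (ts : List HTerm) : ℕ → Option HTerm :=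
  fun v => ((xs.zip ts).find? (fun p => p.1 = v)).map Prod.snd

/-- environment mapping names to LF objects. -/
def lfEnvOf (xs : List ℕ) (ts : List LFObj) : ℕ → Option LFObj :=
  fun v => ((xs.zip ts).find? (fun p => p.1 = v)).map Prod.snd

/-! (A' ~ A)σ : equality of types up to σ-instantiated encodings of embedded objects. -/
mutual
  inductive KSim (σ : ℕ → Option HTerm) : LFKind → LFKind → Prop
    | type : KSim σ .type .type
    | pi {A A' K K'} : TSim σ A' A → KSim σ K' K → KSim σ (.pi A' K') (.pi A K)
  inductive TSim (σ : ℕ → Option HTerm) : LFType → LFType → Prop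
    | tvar {u} : TSim σ (.tvar u) (.tvar u)
    | pi {A A' B B'} : TSim σ A' A → TSim σ B' B → TSim σ (.pi A' B') (.pi A B)
    | lam {A A' B B'} : TSim σ A' A → TSim σ B' B → TSim σ (.lam A' B') (.lam A B)
    | app {A A' M M'} : TSim σ A' A → encO M' = hsubstSim σ (encO M) →
        TSim σ (.app A' M') (.app A M)
end

def EVSim (σ : ℕ → Option HTerm) : EVal → EVal → Prop
  | .kind K', .kind K => KSim σ K' K
  | .type A', .type A => TSim σ A' A
  | _, _ => False

def CtxSim (σ : ℕ → Option HTerm) (Δ' Δ : Ctx) : Prop :=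
  List.Forall₂ (fun p q => p.1 = q.1 ∧ EVSim σ p.2 q.2) Δ' Δ

/-! ## Normal-expression LF derivations (for Statement 14) -/

def NormEV : EVal → Prop
  | .kind K => NormK K
  | .type A => NormT A

def NormCtxP (Γ : Ctx) : Prop := ∀ p ∈ Γ, NormEV p.2

def NormJudg : LFJudg → Prop
  | .kind K => NormK K
  | .istype A K => NormT A ∧ NormK K
  | .isobj M A => NormO M ∧ NormT A

/-! LF typing restricted so that every expression in the derivation is
beta-normal; in abstraction rules the annotation and the Pi-domain coincide. -/
mutual
  inductive WfNCtx : Ctx → Prop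
    | nil : WfNCtx []
    | kind {Γ K u} : WfNKind Γ K → WfNCtx Γ → u ∉ ctxNames Γ →
        WfNCtx ((u, .kind K) :: Γ)
    | type {Γ A x} : WfNType Γ A .type → WfNCtx Γ → x ∉ ctxNames Γ →
        WfNCtx ((x, .type A) :: Γ)
  inductive WfNKind : Ctx → LFKind → Prop
    | type {Γ} : WfNCtx Γ → WfNKind Γ .type
    | pi {Γ A K} (x : ℕ) : WfNType Γ A .type →
        x ∉ ctxNames Γ → x ∉ namesK K →
        WfNKind ((x, .type A) :: Γ) (openK 0 (.fvar x) K) →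
        WfNKind Γ (.pi A K)
  inductive WfNType : Ctx → LFType → LFKind → Prop
    | var {Γ u K} : WfNCtx Γ → (u, .kind K) ∈ Γ → NormK K →
        WfNType Γ (.tvar u) K
    | pi {Γ A B} (x : ℕ) : WfNType Γ A .type →
        x ∉ ctxNames Γ → x ∉ namesT B →
        WfNType ((x, .type A) :: Γ) (openT 0 (.fvar x) B) .type →
        WfNType Γ (.pi A B) .type
    | lam {Γ A B K} (x : ℕ) : WfNType Γ A .type → NormT A →
        x ∉ ctxNames Γ → x ∉ namesT B → x ∉ namesK K →
        WfNType ((x, .type A) :: Γ) (openT 0 (.fvar x) B) (openK 0 (.fvar x) K) →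
        WfNType Γ (.lam A B) (.pi A K)
    | app {Γ A B K K' M} : WfNType Γ A (.pi B K) → WfNObj Γ M B →
        KNF (openK 0 M K) K' → WfNType Γ (.app A M) K'
  inductive WfNObj : Ctx → LFObj → LFType → Prop
    | var {Γ x A} : WfNCtx Γ → (x, .type A) ∈ Γ → NormT A →
        WfNObj Γ (.fvar x) A
    | lam {Γ A B M} (x : ℕ) : WfNType Γ A .type → NormT A →
        x ∉ ctxNames Γ → x ∉ namesO M → x ∉ namesT B →
        WfNObj ((x, .type A) :: Γ) (openO 0 (.fvar x) M) (openT 0 (.fvar x) B) →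
        WfNObj Γ (.lam A M) (.pi A B)
    | app {Γ M N A B B'} : WfNObj Γ M (.pi A B) → WfNObj Γ N A →
        TNF (openT 0 N B) B' → WfNObj Γ (.app M N) B'
end

def WfNJudg (Γ : Ctx) : LFJudg → Prop
  | .kind K => WfNKind Γ K
  | .istype A K => WfNType Γ A K
  | .isobj M A => WfNObj Γ M A

/-! A beta-normal expression has no reducts, so in a derivation whose subjects are normal
every normalization side condition `TNF A A'` or `KNF K K'` is an identity. Normality passes
from the conclusion of each rule to its premises: subterms of normal expressions are normal,
and, since normal forms are exactly the expressions with no `lam` in head position of an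
application, opening a binder with a variable creates no redex. So a derivation with normal
end assertion can be rebuilt rule by rule as a normal one. -/

def LFType.IsLam : LFType → Prop
  | .lam _ _ => True
  | _ => False

def LFObj.IsLam : LFObj → Prop
  | .lam _ _ => True
  | _ => False

mutual
  def NfK : LFKind → Prop
    | .type => True
    | .pi A K => NfT A ∧ NfK K
  def NfT : LFType → Prop
    | .tvar _ => True
    | .pi A B => NfT A ∧ NfT B
    | .lam A B => NfT A ∧ NfT B
    | .app A M => NfT A ∧ NfO M ∧ ¬ A.IsLam
  def NfO : LFObj → Prop
    | .bvar _ => True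
    | .fvar _ => True
    | .lam A M => NfT A ∧ NfO M
    | .app M N => NfO M ∧ NfO N ∧ ¬ M.IsLam
end

mutual
  theorem StepK.not_nfK : ∀ {K K'}, StepK K K' → ¬ NfK K
    | _, _, .pi1 h => fun hn => h.not_nfT hn.1
    | _, _, .pi2 h => fun hn => h.not_nfK hn.2
  theorem StepT.not_nfT : ∀ {A A'}, StepT A A' → ¬ NfT A
    | _, _, .beta => fun hn => hn.2.2 trivial
    | _, _, .pi1 h => fun hn => h.not_nfT hn.1
    | _, _, .pi2 h => fun hn => h.not_nfT hn.2
    | _, _, .lam1 h => fun hn => h.not_nfT hn.1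
    | _, _, .lam2 h => fun hn => h.not_nfT hn.2
    | _, _, .app1 h => fun hn => h.not_nfT hn.1
    | _, _, .app2 h => fun hn => h.not_nfO hn.2.1
  theorem StepO.not_nfO : ∀ {M M'}, StepO M M' → ¬ NfO M
    | _, _, .beta => fun hn => hn.2.2 trivial
    | _, _, .lam1 h => fun hn => h.not_nfT hn.1
    | _, _, .lam2 h => fun hn => h.not_nfO hn.2
    | _, _, .app1 h => fun hn => h.not_nfO hn.1
    | _, _, .app2 h => fun hn => h.not_nfO hn.2.1
end

mutual
  theorem nfK_or_exists_stepK : ∀ K, NfK K ∨ ∃ K', StepK K K'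
    | .type => .inl trivial
    | .pi A K =>
      match nfT_or_exists_stepT A, nfK_or_exists_stepK K with
      | .inr ⟨_, h⟩, _ => .inr ⟨_, .pi1 h⟩
      | .inl _, .inr ⟨_, h⟩ => .inr ⟨_, .pi2 h⟩
      | .inl hA, .inl hK => .inl ⟨hA, hK⟩
  theorem nfT_or_exists_stepT : ∀ A, NfT A ∨ ∃ A', StepT A A'
    | .tvar _ => .inl trivial
    | .pi A B =>
      match nfT_or_exists_stepT A, nfT_or_exists_stepT B with
      | .inr ⟨_, h⟩, _ => .inr ⟨_, .pi1 h⟩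
      | .inl _, .inr ⟨_, h⟩ => .inr ⟨_, .pi2 h⟩
      | .inl hA, .inl hB => .inl ⟨hA, hB⟩
    | .lam A B =>
      match nfT_or_exists_stepT A, nfT_or_exists_stepT B with
      | .inr ⟨_, h⟩, _ => .inr ⟨_, .lam1 h⟩
      | .inl _, .inr ⟨_, h⟩ => .inr ⟨_, .lam2 h⟩
      | .inl hA, .inl hB => .inl ⟨hA, hB⟩
    | .app A M =>
      match nfT_or_exists_stepT A, nfO_or_exists_stepO M with
      | .inr ⟨_, h⟩, _ => .inr ⟨_, .app1 h⟩
      | .inl _, .inr ⟨_, h⟩ => .inr ⟨_, .app2 h⟩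
      | .inl hA, .inl hM =>
        match A, hA with
        | .lam _ _, _ => .inr ⟨_, .beta⟩
        | .tvar _, hA | .pi _ _, hA | .app _ _, hA => .inl ⟨hA, hM, id⟩
  theorem nfO_or_exists_stepO : ∀ M, NfO M ∨ ∃ M', StepO M M'
    | .bvar _ | .fvar _ => .inl trivial
    | .lam A M =>
      match nfT_or_exists_stepT A, nfO_or_exists_stepO M with
      | .inr ⟨_, h⟩, _ => .inr ⟨_, .lam1 h⟩
      | .inl _, .inr ⟨_, h⟩ => .inr ⟨_, .lam2 h⟩
      | .inl hA, .inl hM => .inl ⟨hA, hM⟩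
    | .app M N =>
      match nfO_or_exists_stepO M, nfO_or_exists_stepO N with
      | .inr ⟨_, h⟩, _ => .inr ⟨_, .app1 h⟩
      | .inl _, .inr ⟨_, h⟩ => .inr ⟨_, .app2 h⟩
      | .inl hM, .inl hN =>
        match M, hM with
        | .lam _ _, _ => .inr ⟨_, .beta⟩
        | .bvar _, hM | .fvar _, hM | .app _ _, hM => .inl ⟨hM, hN, id⟩
end

theorem normK_iff_nfK {K : LFKind} : NormK K ↔ NfK K :=
  ⟨fun h => (nfK_or_exists_stepK K).resolve_right fun ⟨K', hs⟩ => h K' hs,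
    fun h _ hs => hs.not_nfK h⟩

theorem normT_iff_nfT {A : LFType} : NormT A ↔ NfT A :=
  ⟨fun h => (nfT_or_exists_stepT A).resolve_right fun ⟨A', hs⟩ => h A' hs,
    fun h _ hs => hs.not_nfT h⟩

theorem normO_iff_nfO {M : LFObj} : NormO M ↔ NfO M :=
  ⟨fun h => (nfO_or_exists_stepO M).resolve_right fun ⟨M', hs⟩ => h M' hs,
    fun h _ hs => hs.not_nfO h⟩

theorem LFType.isLam_openT_fvar {A : LFType} {k x : ℕ} :
    (openT k (.fvar x) A).IsLam ↔ A.IsLam := by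
  cases A <;> simp [openT, LFType.IsLam]

theorem LFObj.isLam_openO_fvar {M : LFObj} {k x : ℕ} :
    (openO k (.fvar x) M).IsLam ↔ M.IsLam := by
  cases M <;> simp only [openO] <;> (try split_ifs) <;> simp [LFObj.IsLam]

mutual
  theorem NfK.openK_fvar : ∀ {K : LFKind} {k : ℕ} (x : ℕ), NfK K → NfK (openK k (.fvar x) K)
    | .type, _, _, _ => trivial
    | .pi _ _, _, x, ⟨hA, hK⟩ => ⟨hA.openT_fvar x, hK.openK_fvar x⟩
  theorem NfT.openT_fvar : ∀ {A : LFType} {k : ℕ} (x : ℕ), NfT A → NfT (openT k (.fvar x) A)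
    | .tvar _, _, _, _ => trivial
    | .pi _ _, _, x, ⟨hA, hB⟩ | .lam _ _, _, x, ⟨hA, hB⟩ =>
      ⟨hA.openT_fvar x, hB.openT_fvar x⟩
    | .app _ _, _, x, ⟨hA, hM, hA'⟩ =>
      ⟨hA.openT_fvar x, hM.openO_fvar x, mt LFType.isLam_openT_fvar.1 hA'⟩
  theorem NfO.openO_fvar : ∀ {M : LFObj} {k : ℕ} (x : ℕ), NfO M → NfO (openO k (.fvar x) M)
    | .bvar n, k, x, _ => by simp only [openO]; split <;> trivial
    | .fvar _, _, _, _ => trivial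
    | .lam _ _, _, x, ⟨hA, hM⟩ => ⟨hA.openT_fvar x, hM.openO_fvar x⟩
    | .app _ _, _, x, ⟨hM, hN, hM'⟩ =>
      ⟨hM.openO_fvar x, hN.openO_fvar x, mt LFObj.isLam_openO_fvar.1 hM'⟩
end

theorem KNF.eq_of_normK {K K' : LFKind} (h : KNF K K') (hK : NormK K) : K' = K := by
  rcases h.1.cases_head with rfl | ⟨_, hs, _⟩
  · rfl
  · exact absurd hs (hK _)

theorem TNF.eq_of_normT {A A' : LFType} (h : TNF A A') (hA : NormT A) : A' = A := by
  rcases h.1.cases_head with rfl | ⟨_, hs, _⟩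
  · rfl
  · exact absurd hs (hA _)

theorem normCtxP_cons_iff {p : ℕ × EVal} {Γ : Ctx} :
    NormCtxP (p :: Γ) ↔ NormEV p.2 ∧ NormCtxP Γ :=
  List.forall_mem_cons

mutual
  theorem WfCtx.wfNCtx : ∀ {Γ : Ctx}, WfCtx Γ → NormCtxP Γ → WfNCtx Γ
    | _, .nil, _ => .nil
    | _, .kind hK hΓ hu, hn => by
      obtain ⟨hnK, hnΓ⟩ := normCtxP_cons_iff.1 hn
      exact .kind (hK.wfNKind hnΓ hnK) (hΓ.wfNCtx hnΓ) hu
    | _, .type hA hΓ hx, hn => by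
      obtain ⟨hnA, hnΓ⟩ := normCtxP_cons_iff.1 hn
      exact .type (hA.wfNType hnΓ hnA) (hΓ.wfNCtx hnΓ) hx
  theorem WfKind.wfNKind : ∀ {Γ : Ctx} {K : LFKind}, WfKind Γ K → NormCtxP Γ → NormK K →
      WfNKind Γ K
    | _, _, .type hΓ, hn, _ => .type (hΓ.wfNCtx hn)
    | _, _, .pi x hA hxΓ hxK hK, hn, hnK => by
      obtain ⟨nA, nK⟩ := normK_iff_nfK.1 hnK
      exact .pi x (hA.wfNType hn (normT_iff_nfT.2 nA)) hxΓ hxK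
        (hK.wfNKind (normCtxP_cons_iff.2 ⟨normT_iff_nfT.2 nA, hn⟩)
          (normK_iff_nfK.2 (nK.openK_fvar x)))
  theorem WfType.wfNType : ∀ {Γ : Ctx} {A : LFType} {K : LFKind}, WfType Γ A K →
      NormCtxP Γ → NormT A → WfNType Γ A K
    | _, _, _, .var hΓ hu hKK', hn, _ => by
      have hK : NormK _ := hn _ hu
      rw [hKK'.eq_of_normK hK]
      exact .var (hΓ.wfNCtx hn) hu hK
    | _, _, _, .pi x hA hxΓ hxB hB, hn, hnAB => by
      obtain ⟨nA, nB⟩ := normT_iff_nfT.1 hnAB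
      exact .pi x (hA.wfNType hn (normT_iff_nfT.2 nA)) hxΓ hxB
        (hB.wfNType (normCtxP_cons_iff.2 ⟨normT_iff_nfT.2 nA, hn⟩)
          (normT_iff_nfT.2 (nB.openT_fvar x)))
    | _, _, _, .lam x hA hxΓ hxB hxK hB hAA', hn, hnAB => by
      obtain ⟨nA, nB⟩ := normT_iff_nfT.1 hnAB
      have hnA := normT_iff_nfT.2 nA
      rw [hAA'.eq_of_normT hnA]
      exact .lam x (hA.wfNType hn hnA) hnA hxΓ hxB hxK
        (hB.wfNType (normCtxP_cons_iff.2 ⟨hnA, hn⟩) (normT_iff_nfT.2 (nB.openT_fvar x)))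
    | _, _, _, .app hA hM hK, hn, hnAM => by
      obtain ⟨nA, nM, -⟩ := normT_iff_nfT.1 hnAM
      exact .app (hA.wfNType hn (normT_iff_nfT.2 nA)) (hM.wfNObj hn (normO_iff_nfO.2 nM)) hK
  theorem WfObj.wfNObj : ∀ {Γ : Ctx} {M : LFObj} {A : LFType}, WfObj Γ M A →
      NormCtxP Γ → NormO M → WfNObj Γ M A
    | _, _, _, .var hΓ hx hAA', hn, _ => by
      have hA : NormT _ := hn _ hx
      rw [hAA'.eq_of_normT hA]
      exact .var (hΓ.wfNCtx hn) hx hA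
    | _, _, _, .lam x hA hxΓ hxM hxB hM hAA', hn, hnAM => by
      obtain ⟨nA, nM⟩ := normO_iff_nfO.1 hnAM
      have hnA := normT_iff_nfT.2 nA
      rw [hAA'.eq_of_normT hnA]
      exact .lam x (hA.wfNType hn hnA) hnA hxΓ hxM hxB
        (hM.wfNObj (normCtxP_cons_iff.2 ⟨hnA, hn⟩) (normO_iff_nfO.2 (nM.openO_fvar x)))
    | _, _, _, .app hM hN hB, hn, hnMN => by
      obtain ⟨nM, nN, -⟩ := normO_iff_nfO.1 hnMN
      exact .app (hM.wfNObj hn (normO_iff_nfO.2 nM)) (hN.wfNObj hn (normO_iff_nfO.2 nN)) hB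
end

/-- if the end assertion of an LF derivation is in beta-normal
form then the derivation can be carried out entirely within normal forms; in
particular abstraction judgments have identical annotation and Pi-domain. -/
theorem normal_derivations (Γ : Ctx) (j : LFJudg)
    (hΓ : NormCtxP Γ) (hj : NormJudg j) (h : WfJudg Γ j) :
    WfNJudg Γ j := by
  cases j with
  | kind K => exact WfKind.wfNKind h hΓ hj
  | istype A K => exact WfType.wfNType h hΓ hj.1
  | isobj M A => exact WfObj.wfNObj h hΓ hj.1

end LFHH
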